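/- arXiv:1205.5350 — 2 statements merged into one kernel-verified Lean document; each statement's English description precedes it below -/
import Mathlib

section
/- For the standard 3-form φ₀ on ℝ⁷ and for every nonzero vector v ∈ ℝ⁷, the 2-form obtained by contracting φ₀ with v descends to a non-degenerate (symplectic) bilinear form on the quotient space ℝ⁷/⟨v⟩. -/
open scoped BigOperators

noncomputable section

/-- The Levi-Civita symbol on `n` indices. -/
def eps {n : ℕ} (f : Fin n → Fin n) : ℝ :=
  ∑ σ : Equiv.Perm (Fin n), if ⇑σ = f then ((Equiv.Perm.sign σ : ℤ) : ℝ) else 0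

/-- `M`-valued `k`-forms on `ℝⁿ` (constant coefficients), encoded by their
(antisymmetric) coefficient functions on index tuples. -/
abbrev Form (M : Type*) (n k : ℕ) := (Fin k → Fin n) → M

/-- Wedge product of an `M`-valued `k`-form with a real `l`-form. -/
def wedge {M : Type*} [AddCommGroup M] [Module ℝ M] {n k l : ℕ}
    (α : Form M n k) (β : Form ℝ n l) : Form M n (k + l) := fun idx =>
  ((Nat.factorial k * Nat.factorial l : ℝ))⁻¹ •
    ∑ σ : Equiv.Perm (Fin (k + l)),
      (((Equiv.Perm.sign σ : ℤ) : ℝ) * β fun b => idx (σ (Fin.natAdd k b))) •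
        α fun a => idx (σ (Fin.castAdd l a))

/-- Hodge star of an `M`-valued `k`-form on `ℝⁿ` (standard metric and orientation). -/
def hodge {M : Type*} [AddCommGroup M] [Module ℝ M] {n k : ℕ} (h : k ≤ n)
    (α : Form M n k) : Form M n (n - k) := fun j =>
  ((Nat.factorial k : ℝ))⁻¹ •
    ∑ i : Fin k → Fin n,
      eps (fun p => Fin.append i j (Fin.cast (by omega) p)) • α i

/-- The coordinate 1-forms `dx^i`. -/
def dx {n : ℕ} (i : Fin n) : Form ℝ n 1 := fun idx => if idx 0 = i then (1 : ℝ) else 0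

/-- `dx^i ∧ dx^j`. -/
def d2 {n : ℕ} (i j : Fin n) : Form ℝ n 2 := wedge (dx i) (dx j)

/-- `dx^i ∧ dx^j ∧ dx^k`. -/
def d3 {n : ℕ} (i j k : Fin n) : Form ℝ n 3 := wedge (d2 i j) (dx k)

/-- The model associative 3-form `φ₀ = dx¹²³ + dx¹⁴⁵ + dx¹⁶⁷ + dx²⁴⁶ − dx²⁵⁷ − dx³⁴⁷ − dx³⁵⁶`
on `ℝ⁷` (with 0-based indices). -/
def phi0 : Form ℝ 7 3 :=
  d3 0 1 2 + d3 0 3 4 + d3 0 5 6 + d3 1 3 5 - d3 1 4 6 - d3 2 3 6 - d3 2 4 5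

/-- Evaluation of a `k`-form on `k` vectors. -/
def evalForm {n k : ℕ} (α : Form ℝ n k) (v : Fin k → (Fin n → ℝ)) : ℝ :=
  ∑ idx : Fin k → Fin n, (∏ a, v a (idx a)) * α idx

/-! ### Auxiliary lemmas -/

lemma d2_apply {n : ℕ} (i j : Fin n) (idx : Fin 2 → Fin n) :
    d2 i j idx = (if idx 0 = i then (1:ℝ) else 0) * (if idx 1 = j then 1 else 0)
      - (if idx 0 = j then (1:ℝ) else 0) * (if idx 1 = i then 1 else 0) := by
  rw [d2, wedge, show (Finset.univ : Finset (Equiv.Perm (Fin 2))) = {1, Equiv.swap 0 1} by decide]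
  rw [Finset.sum_insert (by decide), Finset.sum_singleton]
  simp [dx, Fin.natAdd, Fin.castAdd, Fin.castLE, Equiv.swap_apply_def, Nat.factorial,
    show (Fin.natAdd 1 (0:Fin 1)) = (1:Fin 2) by rfl, show (Fin.castAdd 1 (0:Fin 1)) = (0:Fin 2) by rfl]
  split_ifs <;> ring

set_option maxHeartbeats 2000000 in
lemma d3_apply {n : ℕ} (i j k : Fin n) (idx : Fin 3 → Fin n) :
    d3 i j k idx =
      (if idx 0 = i then (1:ℝ) else 0) * (if idx 1 = j then 1 else 0) * (if idx 2 = k then 1 else 0)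
    - (if idx 0 = i then (1:ℝ) else 0) * (if idx 1 = k then 1 else 0) * (if idx 2 = j then 1 else 0)
    - (if idx 0 = j then (1:ℝ) else 0) * (if idx 1 = i then 1 else 0) * (if idx 2 = k then 1 else 0)
    + (if idx 0 = j then (1:ℝ) else 0) * (if idx 1 = k then 1 else 0) * (if idx 2 = i then 1 else 0)
    + (if idx 0 = k then (1:ℝ) else 0) * (if idx 1 = i then 1 else 0) * (if idx 2 = j then 1 else 0)
    - (if idx 0 = k then (1:ℝ) else 0) * (if idx 1 = j then 1 else 0) * (if idx 2 = i then 1 else 0) := by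
  rw [d3, wedge, show (Finset.univ : Finset (Equiv.Perm (Fin 3))) =
    {1, Equiv.swap 0 1, Equiv.swap 0 2, Equiv.swap 1 2,
     Equiv.swap 0 1 * Equiv.swap 1 2, Equiv.swap 1 2 * Equiv.swap 0 1} by decide]
  rw [Finset.sum_insert (by decide), Finset.sum_insert (by decide), Finset.sum_insert (by decide),
    Finset.sum_insert (by decide), Finset.sum_insert (by decide), Finset.sum_singleton]
  simp only [show (Fin.natAdd 2 (0:Fin 1)) = (2:Fin 3) from rfl,
    show (Fin.castAdd 1 (0:Fin 2)) = (0:Fin 3) from rfl,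
    show (Fin.castAdd 1 (1:Fin 2)) = (1:Fin 3) from rfl,
    Equiv.Perm.coe_one, id_eq,
    show (Equiv.swap (0:Fin 3) 1) 0 = 1 by decide, show (Equiv.swap (0:Fin 3) 1) 1 = 0 by decide,
    show (Equiv.swap (0:Fin 3) 1) 2 = 2 by decide,
    show (Equiv.swap (0:Fin 3) 2) 0 = 2 by decide, show (Equiv.swap (0:Fin 3) 2) 1 = 1 by decide,
    show (Equiv.swap (0:Fin 3) 2) 2 = 0 by decide,
    show (Equiv.swap (1:Fin 3) 2) 0 = 0 by decide, show (Equiv.swap (1:Fin 3) 2) 1 = 2 by decide,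
    show (Equiv.swap (1:Fin 3) 2) 2 = 1 by decide,
    show (Equiv.swap (0:Fin 3) 1 * Equiv.swap 1 2 : Equiv.Perm (Fin 3)) 0 = 1 by decide,
    show (Equiv.swap (0:Fin 3) 1 * Equiv.swap 1 2 : Equiv.Perm (Fin 3)) 1 = 2 by decide,
    show (Equiv.swap (0:Fin 3) 1 * Equiv.swap 1 2 : Equiv.Perm (Fin 3)) 2 = 0 by decide,
    show (Equiv.swap (1:Fin 3) 2 * Equiv.swap 0 1 : Equiv.Perm (Fin 3)) 0 = 2 by decide,
    show (Equiv.swap (1:Fin 3) 2 * Equiv.swap 0 1 : Equiv.Perm (Fin 3)) 1 = 0 by decide,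
    show (Equiv.swap (1:Fin 3) 2 * Equiv.swap 0 1 : Equiv.Perm (Fin 3)) 2 = 1 by decide,
    Equiv.Perm.sign_one,
    show Equiv.Perm.sign (Equiv.swap (0:Fin 3) 1) = -1 by decide,
    show Equiv.Perm.sign (Equiv.swap (0:Fin 3) 2) = -1 by decide,
    show Equiv.Perm.sign (Equiv.swap (1:Fin 3) 2) = -1 by decide,
    show Equiv.Perm.sign (Equiv.swap (0:Fin 3) 1 * Equiv.swap 1 2) = 1 by decide,
    show Equiv.Perm.sign (Equiv.swap (1:Fin 3) 2 * Equiv.swap 0 1) = 1 by decide,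
    d2_apply, dx, smul_eq_mul, Nat.factorial]
  norm_num
  split_ifs <;> ring

def tripleEquiv (n : ℕ) : (Fin n × Fin n × Fin n) ≃ (Fin 3 → Fin n) where
  toFun p := ![p.1, p.2.1, p.2.2]
  invFun g := (g 0, g 1, g 2)
  left_inv p := rfl
  right_inv g := by
    funext i
    fin_cases i <;> rfl

lemma sum_pi3 {M : Type*} [AddCommMonoid M] {n : ℕ} (f : (Fin 3 → Fin n) → M) :
    ∑ g : Fin 3 → Fin n, f g = ∑ i : Fin n, ∑ j : Fin n, ∑ k : Fin n, f ![i, j, k] := by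
  rw [← Equiv.sum_comp (tripleEquiv n) f]
  rw [Fintype.sum_prod_type]
  refine Finset.sum_congr rfl fun i _ => ?_
  rw [Fintype.sum_prod_type]
  rfl

lemma eval_d3 {n : ℕ} (a b c : Fin n) (x y z : Fin n → ℝ) :
    evalForm (d3 a b c) ![x, y, z] =
      x a * y b * z c - x a * y c * z b - x b * y a * z c
      + x b * y c * z a + x c * y a * z b - x c * y b * z a := by
  rw [evalForm, sum_pi3]
  simp only [d3_apply, Fin.prod_univ_three]
  simp only [show ∀ p q : Fin n, (if p = q then (1:ℝ) else 0) = Pi.single (M := fun _ => ℝ) q 1 p from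
    fun p q => by simp [Pi.single_apply]]
  simp only [Matrix.cons_val_zero, Matrix.cons_val_one, Matrix.head_cons,
    Matrix.cons_val_two, Matrix.tail_cons]
  simp only [Pi.single_apply]
  simp only [mul_sub, mul_add, Finset.sum_sub_distrib, Finset.sum_add_distrib]
  simp [mul_ite, ite_mul, Finset.sum_ite_eq', mul_comm, mul_assoc, mul_left_comm]

lemma evalForm_add {n k : ℕ} (α β : Form ℝ n k) (v : Fin k → (Fin n → ℝ)) :
    evalForm (α + β) v = evalForm α v + evalForm β v := by
  simp [evalForm, Pi.add_apply, mul_add, Finset.sum_add_distrib]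

lemma evalForm_sub {n k : ℕ} (α β : Form ℝ n k) (v : Fin k → (Fin n → ℝ)) :
    evalForm (α - β) v = evalForm α v - evalForm β v := by
  simp [evalForm, Pi.sub_apply, mul_sub, Finset.sum_sub_distrib]

/-- The 7-dimensional cross product associated to `φ₀`. -/
def crossC (v w : Fin 7 → ℝ) : Fin 7 → ℝ :=
  ![ v 1*w 2 - v 2*w 1 + (v 3*w 4 - v 4*w 3) + (v 5*w 6 - v 6*w 5),
     -(v 0*w 2 - v 2*w 0) + (v 3*w 5 - v 5*w 3) - (v 4*w 6 - v 6*w 4),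
     v 0*w 1 - v 1*w 0 - (v 3*w 6 - v 6*w 3) - (v 4*w 5 - v 5*w 4),
     -(v 0*w 4 - v 4*w 0) - (v 1*w 5 - v 5*w 1) + (v 2*w 6 - v 6*w 2),
     v 0*w 3 - v 3*w 0 + (v 1*w 6 - v 6*w 1) + (v 2*w 5 - v 5*w 2),
     -(v 0*w 6 - v 6*w 0) + (v 1*w 3 - v 3*w 1) - (v 2*w 4 - v 4*w 2),
     v 0*w 5 - v 5*w 0 - (v 1*w 4 - v 4*w 1) - (v 2*w 3 - v 3*w 2) ]

lemma crossC_0 (x y : Fin 7 → ℝ) : crossC x y 0 = x 1*y 2 - x 2*y 1 + (x 3*y 4 - x 4*y 3) + (x 5*y 6 - x 6*y 5) := rfl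
lemma crossC_1 (x y : Fin 7 → ℝ) : crossC x y 1 = -(x 0*y 2 - x 2*y 0) + (x 3*y 5 - x 5*y 3) - (x 4*y 6 - x 6*y 4) := rfl
lemma crossC_2 (x y : Fin 7 → ℝ) : crossC x y 2 = x 0*y 1 - x 1*y 0 - (x 3*y 6 - x 6*y 3) - (x 4*y 5 - x 5*y 4) := rfl
lemma crossC_3 (x y : Fin 7 → ℝ) : crossC x y 3 = -(x 0*y 4 - x 4*y 0) - (x 1*y 5 - x 5*y 1) + (x 2*y 6 - x 6*y 2) := rfl
lemma crossC_4 (x y : Fin 7 → ℝ) : crossC x y 4 = x 0*y 3 - x 3*y 0 + (x 1*y 6 - x 6*y 1) + (x 2*y 5 - x 5*y 2) := rfl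
lemma crossC_5 (x y : Fin 7 → ℝ) : crossC x y 5 = -(x 0*y 6 - x 6*y 0) + (x 1*y 3 - x 3*y 1) - (x 2*y 4 - x 4*y 2) := rfl
lemma crossC_6 (x y : Fin 7 → ℝ) : crossC x y 6 = x 0*y 5 - x 5*y 0 - (x 1*y 4 - x 4*y 1) - (x 2*y 3 - x 3*y 2) := rfl

lemma eval_phi0 (v w u : Fin 7 → ℝ) :
    evalForm phi0 ![v, w, u] = ∑ i, crossC v w i * u i := by
  rw [phi0]
  rw [evalForm_sub, evalForm_sub, evalForm_sub, evalForm_add, evalForm_add, evalForm_add]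
  simp only [eval_d3]
  rw [Fin.sum_univ_seven]
  simp only [crossC_0, crossC_1, crossC_2, crossC_3, crossC_4, crossC_5, crossC_6]
  ring

set_option maxHeartbeats 1000000 in
lemma lagrange (v w : Fin 7 → ℝ) :
    ∑ i, (w i * (∑ j, v j * v j) - v i * (∑ j, v j * w j))^2
      = (∑ j, v j * v j) * ∑ i, (crossC v w i)^2 := by
  simp only [Fin.sum_univ_seven, crossC_0, crossC_1, crossC_2, crossC_3, crossC_4,
    crossC_5, crossC_6]
  ring

/-- For every nonzero `v ∈ ℝ⁷` the 2-form `i(v)φ₀` descends to a non-degenerate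
(symplectic) form on `ℝ⁷/⟨v⟩`: its kernel `{w | i(v)φ₀(w,·) = 0}` is exactly the
line spanned by `v`. -/
theorem contraction_phi0_descends_nondegenerate (v : Fin 7 → ℝ) (hv : v ≠ 0)
    (w : Fin 7 → ℝ) :
    (∀ u : Fin 7 → ℝ, evalForm phi0 ![v, w, u] = 0) ↔ w ∈ Submodule.span ℝ {v} := by
  constructor
  · intro H
    have hC : ∀ i, crossC v w i = 0 := by
      intro i
      have h := H (fun j => if j = i then 1 else 0)
      rw [eval_phi0] at h
      simpa [mul_ite, mul_one, mul_zero, Finset.sum_ite_eq'] using h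
    set a := ∑ j, v j * v j with ha_def
    set b := ∑ j, v j * w j with hb_def
    obtain ⟨i0, hi0⟩ := Function.ne_iff.mp hv
    have hi0' : v i0 ≠ 0 := by simpa using hi0
    have ha : 0 < a := by
      have h1 : 0 < v i0 * v i0 := mul_self_pos.mpr hi0'
      have h2 : v i0 * v i0 ≤ a :=
        Finset.single_le_sum (f := fun j => v j * v j)
          (fun j _ => mul_self_nonneg (v j)) (Finset.mem_univ i0)
      linarith
    have hz : ∑ i, (crossC v w i)^2 = 0 :=
      Finset.sum_eq_zero fun i _ => by rw [hC i]; ring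
    have hsum : ∑ i, (w i * a - v i * b)^2 = 0 := by
      rw [lagrange, hz, mul_zero]
    have hcoord : ∀ i : Fin 7, w i * a - v i * b = 0 := by
      intro i
      have := (Finset.sum_eq_zero_iff_of_nonneg
        (fun i _ => sq_nonneg (w i * a - v i * b))).mp hsum i (Finset.mem_univ i)
      exact (pow_eq_zero_iff two_ne_zero).mp this
    rw [Submodule.mem_span_singleton]
    refine ⟨b / a, funext fun i => ?_⟩
    have hi := hcoord i
    have hane : a ≠ 0 := ne_of_gt ha
    field_simp
    rw [Pi.smul_apply, smul_eq_mul]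
    field_simp
    linarith [hi]
  · intro hw u
    obtain ⟨c, rfl⟩ := Submodule.mem_span_singleton.mp hw
    rw [eval_phi0, Fin.sum_univ_seven]
    simp only [crossC_0, crossC_1, crossC_2, crossC_3, crossC_4, crossC_5, crossC_6,
      Pi.smul_apply, smul_eq_mul]
    ring
end
end

section
/- Let β ∈ (−3, −1) and consider the weighted Hölder spaces C^{k,α}_β on ℝ³ × ℝ⁴ with weight w(x,y) = 1 + |y|. Suppose L is a formally self-adjoint first-order elliptic operator on a graded bundle over ℝ³ × ℝ⁴ such that: (i) the a priori estimate ‖a‖_{C^{1,α}_β} ≤ c‖La‖_{C^{0,α}_{β−1}} holds on a closed subspace 𝔄^{1,α}_β ⊂ C^{1,α}_β, (ii) every element of the kernel of L* in the dual of 𝔄^{0,α}_{β−1} extends to a smooth translation-invariant solution of Lb = 0 lying in C^{1,α}_{−3−β}, and (iii) the same a priori estimate holds for the exponent −3 − β ∈ (−3, −1). Then L : 𝔄^{1,α}_β → 𝔄^{0,α}_{β−1} is invertible (bijective with bounded inverse). -/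
/-- The abstract duality argument for invertibility of the model operator
`L = L_I : 𝔄^{1,α}_β → 𝔄^{0,α}_{β−1}` (for a weight `β ∈ (−3,−1)`): the a priori
estimate `‖a‖ ≤ c‖La‖` gives injectivity and closed range, and the hypothesis that
every element of the kernel of `L*` in the dual space vanishes (obtained in the
geometric situation by extending cokernel elements to translation-invariant solutions
in `C^{1,α}_{−3−β}` and applying the a priori estimate at the dual weight
`−3−β ∈ (−3,−1)`) gives surjectivity; hence `L` is invertible with bounded inverse. -/
theorem model_operator_invertible
    {A B : Type*} [NormedAddCommGroup A] [NormedSpace ℝ A] [CompleteSpace A]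
    [NormedAddCommGroup B] [NormedSpace ℝ B] [CompleteSpace B]
    (β : ℝ) (hβ : β ∈ Set.Ioo (-3 : ℝ) (-1))
    (L : A →L[ℝ] B) (c : ℝ) (hc : 0 < c)
    (hapriori : ∀ a, ‖a‖ ≤ c * ‖L a‖)
    (hdual : ∀ f : B →L[ℝ] ℝ, (∀ a, f (L a) = 0) → f = 0) :
    ∃ R : B →L[ℝ] A, (∀ a, R (L a) = a) ∧ (∀ b, L (R b) = b) := by
  -- The a priori estimate makes `L` antilipschitz, hence injective with closed range.
  have hanti : AntilipschitzWith c.toNNReal L :=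
    L.antilipschitz_of_bound (fun x => by
      simpa [Real.coe_toNNReal _ hc.le] using hapriori x)
  have hinj : Function.Injective L := hanti.injective
  have hclosed : IsClosed (Set.range L) := hanti.isClosed_range L.uniformContinuous
  -- Surjectivity: otherwise Hahn–Banach yields a nonzero functional killing the range,
  -- contradicting the duality hypothesis.
  have hsurj : Function.Surjective L := by
    intro b
    by_contra hb
    push_neg at hb
    have hbmem : b ∉ Set.range L := by
      rintro ⟨a, ha⟩; exact hb a ha
    have hconv : Convex ℝ (Set.range ⇑L) := by
      have : Set.range ⇑L = ↑(LinearMap.range (L : A →ₗ[ℝ] B)) := by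
        ext x; simp [LinearMap.mem_range]
      rw [this]
      exact (LinearMap.range (L : A →ₗ[ℝ] B)).convex
    obtain ⟨f, u, hfs, hfb⟩ := geometric_hahn_banach_closed_point hconv hclosed hbmem
    have hzero : ∀ a, f (L a) = 0 := by
      intro a
      by_contra hfa
      set t : ℝ := (u + 1) / f (L a) with ht
      have : f (L (t • a)) < u := hfs _ ⟨t • a, rfl⟩
      rw [map_smul, map_smul, smul_eq_mul, ht, div_mul_cancel₀ _ hfa] at this
      linarith
    have := hdual f hzero
    have h0 : f 0 < u := hfs 0 ⟨0, by simp⟩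
    rw [this] at hfb
    simp at hfb h0
    linarith
  -- Conclude with the open mapping theorem.
  let e : A ≃L[ℝ] B := ContinuousLinearEquiv.ofBijective L
    (LinearMap.ker_eq_bot.mpr hinj) (LinearMap.range_eq_top.mpr hsurj)
  refine ⟨e.symm.toContinuousLinearMap, fun a => ?_, fun b => ?_⟩
  · exact e.symm_apply_apply a
  · exact e.apply_symm_apply b
end
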